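/- For each n ≥ 0 let θ_n := Σ_{k≥1} d_k 2^{−k}, where d_k = t_{k−1} for 1 ≤ k ≤ 2^n and d_k = 1 − t_{(k−1) mod 2^n} for k > 2^n (i.e. the binary expansion of θ_n consists of the Thue–Morse prefix of length 2^n followed by the periodic repetition of its digit-wise complement). Then h(θ_n) = (log 2)/2^n; equivalently, the smallest root of the kneading series satisfies r(θ_n) = 2^{−1/2^n}. -/

import Mathlib

open scoped Topology

noncomputable section

/-- The doubling map `D(x) = 2x mod 1`. -/
def D (x : ℝ) : ℝ := Int.fract (2 * x)

/-- The set of real kneading angles. -/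
def 𝓡 : Set ℝ := {θ : ℝ | θ ∈ Set.Icc 0 (1/2) ∧ ∀ n : ℕ, D^[n] θ ∉ Set.Ioo θ (1 - θ)}

/-- The `(k+1)`-st digit of the non-terminating binary expansion of `x ∈ (0,1]`. -/
def dig (x : ℝ) (k : ℕ) : ℤ := ⌈(2:ℝ) ^ (k+1) * x⌉ - 2 * ⌈(2:ℝ) ^ k * x⌉ + 1

/-- The kneading series of `θ` at a complex argument `t`:
`P_θ(t) = 1 + ∑_{k ≥ 1} (-1)^{θ_k} t^k`, where `(θ_k)` is the non-terminating
binary digit sequence of `2θ`. -/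
def Pc (θ : ℝ) (t : ℂ) : ℂ := 1 + ∑' k : ℕ, (-1 : ℂ) ^ (dig (2*θ) k) * t ^ (k+1)

/-- The kneading series of `θ` at a real argument. -/
def Pr (θ : ℝ) (t : ℝ) : ℝ := 1 + ∑' k : ℕ, (-1 : ℝ) ^ (dig (2*θ) k) * t ^ (k+1)

/-- The smallest positive real root of the kneading series (or `1` if none). -/
def rr (θ : ℝ) : ℝ := sInf ({t : ℝ | t ∈ Set.Ioo (0:ℝ) 1 ∧ Pr θ t = 0} ∪ {1})

/-- The entropy `h(θ) = -log r(θ)`, with `h(0) = 0`. -/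
def ent (θ : ℝ) : ℝ := if θ = 0 then 0 else -Real.log (rr θ)

/-- The extended entropy `H(θ) = sup {h(θ') : θ' ∈ 𝓡, θ' ≤ θ}`. -/
def Hext (θ : ℝ) : ℝ := sSup (ent '' {x | x ∈ 𝓡 ∧ x ≤ θ})

/-- `s` is the non-terminating binary expansion of `x` (digit `k+1` is `s k`). -/
def IsBinExp (x : ℝ) (s : ℕ → ℕ) : Prop :=
  (∀ k, s k ≤ 1) ∧ (∀ N, ∃ k, N ≤ k ∧ s k = 1) ∧ x = ∑' k : ℕ, (s k : ℝ) / 2 ^ (k+1)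

/-- `f` is locally Hölder continuous of exponent `η` at `z`, within the domain `I`. -/
def HolderAt (f : ℝ → ℝ) (I : Set ℝ) (z η : ℝ) : Prop :=
  ∃ ε > (0:ℝ), ∃ C : ℝ,
    ∀ x ∈ I, ∀ y ∈ I, |x - z| < ε → |y - z| < ε → |f x - f y| ≤ C * |x - y| ^ η

/-- The local Hölder exponent of `f` at `z`, within the domain `I`. -/
def holderExp (f : ℝ → ℝ) (I : Set ℝ) (z : ℝ) : ℝ :=
  sSup {η : ℝ | 0 < η ∧ HolderAt f I z η}

/-- `(a,b)` is a plateau of `g`, viewed as a function with domain `[0,1/2]`. -/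
def IsPlateau (g : ℝ → ℝ) (a b : ℝ) : Prop :=
  a < b ∧ ∀ x ∈ Set.Ioo a b ∩ Set.Icc (0:ℝ) (1/2),
    ∀ y ∈ Set.Ioo a b ∩ Set.Icc (0:ℝ) (1/2), g x = g y

/-- `θ` does not lie in any plateau of `g`. -/
def NotInPlateau (g : ℝ → ℝ) (θ : ℝ) : Prop :=
  ¬ ∃ a b : ℝ, IsPlateau g a b ∧ θ ∈ Set.Ioo a b

/-- The Thue–Morse sequence: parity of the number of 1's in the binary expansion. -/
def tm (m : ℕ) : ℕ := (Nat.digits 2 m).sum % 2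

/-- The Feigenbaum angle `θ⋆ = ∑_{k ≥ 1} t_{k-1} 2^{-k}`. -/
def thetaStar : ℝ := ∑' k : ℕ, (tm k : ℝ) / 2 ^ (k+1)

/-- The survivor set of the doubling map with hole `(θ, 1-θ)`. -/
def K (θ : ℝ) : Set ℝ := {x : ℝ | x ∈ Set.Ico (0:ℝ) 1 ∧ ∀ n : ℕ, D^[n] x ∉ Set.Ioo θ (1 - θ)}

/-- Digits of the angle `θ_n`: the Thue–Morse prefix of length `2^n` followed by the
periodic repetition of its digit-wise complement. -/
def tipDig (n k : ℕ) : ℕ := if k < 2 ^ n then tm k else 1 - tm (k % 2 ^ n)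

/-- The angle `θ_n` landing at the tip of the `n`-fold period doubling copy. -/
def tip (n : ℕ) : ℝ := ∑' k : ℕ, (tipDig n k : ℝ) / 2 ^ (k+1)


-- Auxiliary lemmas

lemma tm_le_one (m : ℕ) : tm m ≤ 1 := Nat.lt_succ_iff.mp (Nat.mod_lt _ two_pos)

lemma tm_zero : tm 0 = 0 := by simp [tm]

lemma tm_one : tm 1 = 1 := by simp [tm]

lemma tm_rec (m : ℕ) : tm m = (m % 2 + tm (m / 2)) % 2 := by
  rcases Nat.eq_zero_or_pos m with h | h
  · subst h; simp [tm]
  · unfold tm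
    rw [Nat.digits_def' (by norm_num : 1 < 2) h]
    simp [List.sum_cons, Nat.add_mod]

lemma tm_pow_add (n : ℕ) : ∀ r < 2 ^ n, tm (2 ^ n + r) = 1 - tm r := by
  induction n with
  | zero =>
    intro r hr
    interval_cases r
    · simp [tm_one, tm_zero]
  | succ n ih =>
    intro r hr
    have h1 : (2 ^ (n+1) + r) % 2 = r % 2 := by omega
    have h2 : (2 ^ (n+1) + r) / 2 = 2 ^ n + r / 2 := by omega
    have h3 : r / 2 < 2 ^ n := by omega
    have h4 := ih (r / 2) h3
    have h5 := tm_rec (2 ^ (n+1) + r)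
    have h6 := tm_rec r
    have h7 := tm_le_one (r / 2)
    rw [h1, h2, h4] at h5
    omega

/-- partial digit value -/
def Npart (s : ℕ → ℕ) : ℕ → ℤ
  | 0 => 0
  | (m+1) => 2 * Npart s m + s m

lemma summable_shift (s : ℕ → ℕ) (hs : ∀ k, s k ≤ 1) (m : ℕ) :
    Summable (fun k => (s (m + k) : ℝ) / 2 ^ (k+1)) := by
  apply Summable.of_nonneg_of_le (fun k => by positivity) (fun k => ?_)
    (summable_geometric_of_lt_one (by norm_num) (by norm_num : (1:ℝ)/2 < 1))
  have h1 : ((s (m+k) : ℝ)) ≤ 1 := by exact_mod_cast hs (m+k)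
  calc (s (m + k) : ℝ) / 2 ^ (k+1) ≤ 1 / 2 ^ (k+1) := by
        apply div_le_div_of_nonneg_right h1 (by positivity) |>.trans_eq rfl
    _ ≤ (1/2) ^ k := by
        rw [div_pow, one_pow]
        apply div_le_div_of_nonneg_left (by norm_num) (by positivity)
        exact pow_le_pow_right₀ (by norm_num) (by omega)

lemma tail_pos (s : ℕ → ℕ) (hs : ∀ k, s k ≤ 1) (hinf : ∀ N, ∃ k, N ≤ k ∧ s k = 1) (m : ℕ) :
    0 < ∑' k, (s (m + k) : ℝ) / 2 ^ (k+1) := by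
  obtain ⟨k, hk, hk1⟩ := hinf m
  refine Summable.tsum_pos (summable_shift s hs m) (fun i => by positivity) (k - m) ?_
  have : m + (k - m) = k := by omega
  rw [this, hk1]
  positivity

lemma tail_le_one (s : ℕ → ℕ) (hs : ∀ k, s k ≤ 1) (m : ℕ) :
    ∑' k, (s (m + k) : ℝ) / 2 ^ (k+1) ≤ 1 := by
  have h2 : ∑' k : ℕ, (1:ℝ) / 2 ^ (k+1) = 1 := by
    have : ∀ k : ℕ, (1:ℝ) / 2 ^ (k+1) = (1/2) * (1/2)^k := by
      intro k; rw [pow_succ, one_div_pow]; ring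
    rw [tsum_congr this, tsum_mul_left, tsum_geometric_of_lt_one (by norm_num) (by norm_num)]
    norm_num
  rw [← h2]
  apply Summable.tsum_le_tsum (fun k => ?_) (summable_shift s hs m)
  · apply Summable.of_nonneg_of_le (fun k => by positivity) (fun k => ?_)
      (summable_geometric_of_lt_one (by norm_num) (by norm_num : (1:ℝ)/2 < 1))
    rw [div_pow, one_pow]
    apply div_le_div_of_nonneg_left (by norm_num) (by positivity)
    exact pow_le_pow_right₀ (by norm_num) (by omega)
  · have h1 : ((s (m+k) : ℝ)) ≤ 1 := by exact_mod_cast hs (m+k)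
    exact div_le_div_of_nonneg_right h1 (by positivity) |>.trans_eq rfl

lemma key_expand (x : ℝ) (s : ℕ → ℕ) (h : IsBinExp x s) (m : ℕ) :
    (2:ℝ) ^ m * x = Npart s m + ∑' k, (s (m + k) : ℝ) / 2 ^ (k+1) := by
  obtain ⟨hs, hinf, hx⟩ := h
  induction m with
  | zero => simpa [Npart] using hx
  | succ m ih =>
    have h2 : (2:ℝ) ^ (m+1) * x = 2 * ((2:ℝ)^m * x) := by ring
    rw [h2, ih]
    have hsum := summable_shift s hs m
    have h3 : (2:ℝ) * ∑' k, (s (m + k) : ℝ) / 2 ^ (k+1)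
        = ∑' k, (s (m + k) : ℝ) / 2 ^ k := by
      rw [← tsum_mul_left]
      apply tsum_congr; intro k
      rw [pow_succ]; ring
    have hsum2 : Summable (fun k => (s (m + k) : ℝ) / 2 ^ k) := by
      have : Summable (fun i => 2 * ((s (m + i) : ℝ) / 2 ^ (i + 1))) := hsum.mul_left 2
      convert this using 2 with k
      rw [pow_succ]; ring
    have h4 : ∑' k, (s (m + k) : ℝ) / 2 ^ k
        = (s m : ℝ) + ∑' k, (s (m + 1 + k) : ℝ) / 2 ^ (k+1) := by
      rw [Summable.tsum_eq_zero_add hsum2]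
      simp only [pow_zero, add_zero, div_one]
      congr 1
      apply tsum_congr; intro k
      rw [show m + 1 + k = m + (k + 1) by omega]
    rw [mul_add, h3, h4, Npart]
    push_cast
    ring

lemma ceil_pow (x : ℝ) (s : ℕ → ℕ) (h : IsBinExp x s) (m : ℕ) :
    ⌈(2:ℝ) ^ m * x⌉ = Npart s m + 1 := by
  rw [key_expand x s h m, add_comm, Int.ceil_add_intCast]
  have h1 := tail_pos s h.1 h.2.1 m
  have h2 := tail_le_one s h.1 m
  have : ⌈∑' k, (s (m + k) : ℝ) / 2 ^ (k+1)⌉ = 1 := by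
    rw [Int.ceil_eq_iff]
    constructor <;> [simpa using h1; simpa using h2]
  omega

lemma dig_eq (x : ℝ) (s : ℕ → ℕ) (h : IsBinExp x s) (k : ℕ) : dig x k = s k := by
  unfold dig
  rw [ceil_pow x s h (k+1), ceil_pow x s h k, Npart]
  push_cast
  ring_nf

lemma tipDig_le_one (n k : ℕ) : tipDig n k ≤ 1 := by
  unfold tipDig
  split
  · exact tm_le_one k
  · omega

lemma tipDig_pow_mul (n j : ℕ) (hj : 1 ≤ j) : tipDig n (2 ^ n * j) = 1 := by
  unfold tipDig
  rw [if_neg (by nlinarith [Nat.one_le_two_pow (n := n)]), Nat.mul_mod_right, tm_zero]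

lemma tipDig_ones (n N : ℕ) : ∃ k, N ≤ k ∧ tipDig n k = 1 := by
  refine ⟨2 ^ n * (N + 1), ?_, tipDig_pow_mul n (N+1) (by omega)⟩
  calc N ≤ N + 1 := by omega
    _ ≤ 2 ^ n * (N + 1) := by nlinarith [Nat.one_le_two_pow (n := n)]

lemma tipDig_zero (n : ℕ) : tipDig n 0 = 0 := by
  unfold tipDig
  rw [if_pos (Nat.two_pow_pos n), tm_zero]

lemma isBinExp_two_tip (n : ℕ) : IsBinExp (2 * tip n) (fun k => tipDig n (k+1)) := by
  refine ⟨fun k => tipDig_le_one n (k+1), fun N => ?_, ?_⟩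
  · obtain ⟨k, hk, h1⟩ := tipDig_ones n (N+1)
    refine ⟨k - 1, by omega, ?_⟩
    show tipDig n (k - 1 + 1) = 1
    rwa [show k - 1 + 1 = k by omega]
  · have hsum : Summable (fun k => (tipDig n k : ℝ) / 2 ^ (k+1)) := by
      simpa using summable_shift (tipDig n) (tipDig_le_one n) 0
    have hsum2 : Summable (fun k => (tipDig n k : ℝ) / 2 ^ k) := by
      have : Summable (fun i => 2 * ((tipDig n i : ℝ) / 2 ^ (i + 1))) := hsum.mul_left 2
      convert this using 2 with k
      rw [pow_succ]; ring
    have h1 : 2 * tip n = ∑' k, (tipDig n k : ℝ) / 2 ^ k := by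
      rw [tip, ← tsum_mul_left]
      apply tsum_congr; intro k
      rw [pow_succ]; ring
    rw [h1, Summable.tsum_eq_zero_add hsum2, tipDig_zero]
    simp

lemma neg_one_pow_sub (a : ℕ) (ha : a ≤ 1) : (-1:ℝ) ^ (1 - a) = -(-1:ℝ) ^ a := by
  interval_cases a <;> norm_num

lemma A_prod (n : ℕ) (t : ℝ) :
    ∑ r ∈ Finset.range (2 ^ n), (-1:ℝ) ^ tm r * t ^ r
      = ∏ j ∈ Finset.range n, (1 - t ^ 2 ^ j) := by
  induction n with
  | zero => simp [tm_zero]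
  | succ n ih =>
    rw [show 2 ^ (n+1) = 2 ^ n + 2 ^ n by ring, Finset.sum_range_add,
      Finset.prod_range_succ, ← ih]
    have h2 : ∀ x ∈ Finset.range (2 ^ n),
        (-1:ℝ) ^ tm (2 ^ n + x) * t ^ (2 ^ n + x)
          = -(t ^ 2 ^ n * ((-1:ℝ) ^ tm x * t ^ x)) := by
      intro x hx
      rw [tm_pow_add n x (Finset.mem_range.mp hx),
        neg_one_pow_sub _ (tm_le_one x), pow_add]
      ring
    rw [Finset.sum_congr rfl h2, Finset.sum_neg_distrib]
    · rw [← Finset.mul_sum]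
      ring

lemma summable_pow (t : ℝ) (ht0 : 0 ≤ t) (ht1 : t < 1) (c : ℕ → ℝ) (hc : ∀ k, |c k| ≤ 1) :
    Summable (fun k => c k * t ^ k) := by
  apply Summable.of_norm_bounded (summable_geometric_of_lt_one ht0 ht1)
  intro k
  rw [norm_mul, norm_pow, Real.norm_eq_abs, Real.norm_eq_abs, abs_of_nonneg ht0]
  calc |c k| * t ^ k ≤ 1 * t ^ k := by
        apply mul_le_mul_of_nonneg_right (hc k) (by positivity)
    _ = t ^ k := by ring

lemma Pr_tip (n : ℕ) (t : ℝ) (ht0 : 0 ≤ t) (ht1 : t < 1) :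
    (1 - t ^ 2 ^ n) * Pr (tip n) t
      = (∏ j ∈ Finset.range n, (1 - t ^ 2 ^ j)) * (1 - 2 * t ^ 2 ^ n) := by
  have hσabs : ∀ k, |(-1:ℝ) ^ tipDig n k| ≤ 1 := fun k => by simp [abs_pow]
  have heabs : ∀ k, |(-1:ℝ) ^ tm (k % 2 ^ n)| ≤ 1 := fun k => by simp [abs_pow]
  have hSsum : Summable (fun k => (-1:ℝ) ^ tipDig n k * t ^ k) :=
    summable_pow t ht0 ht1 _ hσabs
  have hBsum : Summable (fun k => (-1:ℝ) ^ tm (k % 2 ^ n) * t ^ k) :=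
    summable_pow t ht0 ht1 _ heabs
  -- Pr equals the full signed series S
  have hPr : Pr (tip n) t = ∑' k, (-1:ℝ) ^ tipDig n k * t ^ k := by
    have hdig : ∀ k, dig (2 * tip n) k = (tipDig n (k+1) : ℤ) :=
      dig_eq _ _ (isBinExp_two_tip n)
    have h1 : ∀ k : ℕ, (-1 : ℝ) ^ (dig (2 * tip n) k) * t ^ (k+1)
        = (-1:ℝ) ^ tipDig n (k+1) * t ^ (k+1) := by
      intro k
      rw [hdig k, zpow_natCast]
    rw [Pr, tsum_congr h1, Summable.tsum_eq_zero_add hSsum]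
    simp [tipDig_zero]
  -- head sums equal A
  have hheadσ : ∑ r ∈ Finset.range (2 ^ n), (-1:ℝ) ^ tipDig n r * t ^ r
      = ∑ r ∈ Finset.range (2 ^ n), (-1:ℝ) ^ tm r * t ^ r := by
    refine Finset.sum_congr rfl fun r hr => ?_
    rw [tipDig, if_pos (Finset.mem_range.mp hr)]
  have hheade : ∑ r ∈ Finset.range (2 ^ n), (-1:ℝ) ^ tm (r % 2 ^ n) * t ^ r
      = ∑ r ∈ Finset.range (2 ^ n), (-1:ℝ) ^ tm r * t ^ r := by
    refine Finset.sum_congr rfl fun r hr => ?_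
    rw [Nat.mod_eq_of_lt (Finset.mem_range.mp hr)]
  -- recursion for B
  have hBrec : (∑' k, (-1:ℝ) ^ tm (k % 2 ^ n) * t ^ k)
      = (∑ r ∈ Finset.range (2 ^ n), (-1:ℝ) ^ tm r * t ^ r)
        + t ^ 2 ^ n * ∑' k, (-1:ℝ) ^ tm (k % 2 ^ n) * t ^ k := by
    nth_rewrite 1 [← Summable.sum_add_tsum_nat_add (2 ^ n) hBsum]
    rw [hheade]
    congr 1
    have h2 : ∀ k : ℕ, (-1:ℝ) ^ tm ((k + 2 ^ n) % 2 ^ n) * t ^ (k + 2 ^ n)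
        = ((-1:ℝ) ^ tm (k % 2 ^ n) * t ^ k) * t ^ 2 ^ n := by
      intro k
      rw [Nat.add_mod_right, pow_add]
      ring
    rw [tsum_congr h2, tsum_mul_right]
    ring
  -- formula for S
  have hSrec : (∑' k, (-1:ℝ) ^ tipDig n k * t ^ k)
      = (∑ r ∈ Finset.range (2 ^ n), (-1:ℝ) ^ tm r * t ^ r)
        - t ^ 2 ^ n * ∑' k, (-1:ℝ) ^ tm (k % 2 ^ n) * t ^ k := by
    nth_rewrite 1 [← Summable.sum_add_tsum_nat_add (2 ^ n) hSsum]
    rw [hheadσ]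
    have h2 : ∀ k : ℕ, (-1:ℝ) ^ tipDig n (k + 2 ^ n) * t ^ (k + 2 ^ n)
        = -(((-1:ℝ) ^ tm (k % 2 ^ n) * t ^ k) * t ^ 2 ^ n) := by
      intro k
      have hge : ¬ (k + 2 ^ n < 2 ^ n) := by omega
      rw [tipDig, if_neg hge, Nat.add_mod_right,
        neg_one_pow_sub _ (tm_le_one _), pow_add]
      ring
    rw [tsum_congr h2, tsum_neg, tsum_mul_right]
    ring
  rw [hPr, ← A_prod n t]
  have h1 : (1 - t ^ 2 ^ n) * (∑' k, (-1:ℝ) ^ tm (k % 2 ^ n) * t ^ k)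
      = ∑ r ∈ Finset.range (2 ^ n), (-1:ℝ) ^ tm r * t ^ r := by
    rw [sub_mul, one_mul]
    linarith [hBrec]
  calc (1 - t ^ 2 ^ n) * (∑' k, (-1:ℝ) ^ tipDig n k * t ^ k)
      = (1 - t ^ 2 ^ n) * (∑ r ∈ Finset.range (2 ^ n), (-1:ℝ) ^ tm r * t ^ r)
        - t ^ 2 ^ n * ((1 - t ^ 2 ^ n) * ∑' k, (-1:ℝ) ^ tm (k % 2 ^ n) * t ^ k) := by
        rw [hSrec]; ring
    _ = (1 - t ^ 2 ^ n) * (∑ r ∈ Finset.range (2 ^ n), (-1:ℝ) ^ tm r * t ^ r)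
        - t ^ 2 ^ n * (∑ r ∈ Finset.range (2 ^ n), (-1:ℝ) ^ tm r * t ^ r) := by rw [h1]
    _ = (∑ r ∈ Finset.range (2 ^ n), (-1:ℝ) ^ tm r * t ^ r) * (1 - 2 * t ^ 2 ^ n) := by
        ring

lemma tip_pos (n : ℕ) : 0 < tip n := by
  have hsum : Summable (fun k => (tipDig n k : ℝ) / 2 ^ (k+1)) := by
    simpa using summable_shift (tipDig n) (tipDig_le_one n) 0
  refine Summable.tsum_pos hsum (fun i => by positivity) (2 ^ n) ?_
  rw [show (2:ℕ) ^ n = 2 ^ n * 1 by ring, tipDig_pow_mul n 1 le_rfl]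
  positivity


/-- the entropy of the tip angle `θ_n` equals `(log 2)/2^n`;
equivalently, the smallest root of its kneading series is `2^{-1/2^n}`. -/
theorem tip_entropy (n : ℕ) :
    ent (tip n) = Real.log 2 / 2 ^ n ∧ rr (tip n) = (2:ℝ) ^ (-(1:ℝ) / 2 ^ n) := by
  set ρ : ℝ := (2:ℝ) ^ (-(1:ℝ) / 2 ^ n) with hρ
  have hρ0 : 0 < ρ := Real.rpow_pos_of_pos (by norm_num) _
  have hρ1 : ρ < 1 := by
    apply Real.rpow_lt_one_of_one_lt_of_neg one_lt_two
    have : (0:ℝ) < 2 ^ n := by positivity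
    rw [div_neg_iff]
    right
    constructor <;> [norm_num; exact this]
  have hρm : ρ ^ (2 ^ n : ℕ) = 1 / 2 := by
    rw [hρ, ← Real.rpow_natCast ((2:ℝ) ^ (-(1:ℝ) / 2 ^ n)) (2 ^ n),
      ← Real.rpow_mul (by norm_num : (0:ℝ) ≤ 2)]
    have h2 : (-(1:ℝ) / 2 ^ n) * ((2 ^ n : ℕ) : ℝ) = -1 := by
      push_cast
      field_simp
    rw [h2, Real.rpow_neg_one]
    norm_num
  have hApos : ∀ t : ℝ, 0 ≤ t → t < 1 →
      0 < ∏ j ∈ Finset.range n, (1 - t ^ 2 ^ j) := by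
    intro t h0 h1
    apply Finset.prod_pos
    intro j _
    have : t ^ 2 ^ j < 1 := pow_lt_one₀ h0 h1 (by positivity)
    linarith
  have hset : {t : ℝ | t ∈ Set.Ioo (0:ℝ) 1 ∧ Pr (tip n) t = 0} = {ρ} := by
    ext t
    simp only [Set.mem_setOf_eq, Set.mem_singleton_iff, Set.mem_Ioo]
    constructor
    · rintro ⟨⟨h0, h1⟩, hr⟩
      have := Pr_tip n t h0.le h1
      rw [hr, mul_zero] at this
      have hA := hApos t h0.le h1
      have hroot : 1 - 2 * t ^ 2 ^ n = 0 := by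
        rcases mul_eq_zero.mp this.symm with h | h
        · linarith
        · exact h
      have htm : t ^ (2 ^ n : ℕ) = ρ ^ (2 ^ n : ℕ) := by
        rw [hρm]; linarith
      exact (pow_left_strictMonoOn₀ (n := 2 ^ n) (Nat.two_pow_pos n).ne').injOn
        h0.le hρ0.le htm
    · rintro rfl
      refine ⟨⟨hρ0, hρ1⟩, ?_⟩
      have h2 := Pr_tip n ρ hρ0.le hρ1
      rw [hρm] at h2
      have h4 : (1:ℝ) - 2 * (1/2) = 0 := by norm_num
      rw [h4, mul_zero] at h2
      linarith
  have hrr : rr (tip n) = ρ := by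
    rw [rr, hset, Set.singleton_union, csInf_pair]
    exact inf_eq_left.mpr hρ1.le
  refine ⟨?_, hrr⟩
  rw [ent, if_neg (ne_of_gt (tip_pos n)), hrr, hρ, Real.log_rpow (by norm_num)]
  ring

end
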